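/- For natural numbers K ≤ n with K ≥ 1, one has (1 - K/n)^{n-K} ≥ e^{-K}. -/

import Mathlib

/-! With `m = n - K` one has `1 - K/n = m/(m+K)`, and `1 + K/m ≤ e^{K/m}` gives
`e^{-K/m} ≤ m/(m+K)`; raise this to the `m`-th power. -/

open Real

theorem exp_neg_le_inv_one_add {y : ℝ} (hy : 0 < 1 + y) : exp (-y) ≤ (1 + y)⁻¹ := by
  rw [exp_neg]
  exact inv_anti₀ hy (by linarith [add_one_le_exp y])

theorem exp_neg_le_div_add_pow {t : ℝ} (ht : 0 ≤ t) (m : ℕ) : exp (-t) ≤ (m / (m + t)) ^ m := by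
  rcases Nat.eq_zero_or_pos m with rfl | hm
  · simpa using ht
  have hm' : (0 : ℝ) < m := by exact_mod_cast hm
  have hstep : exp (-(t / m)) ≤ m / (m + t) := by
    have h := exp_neg_le_inv_one_add (y := t / m) (by positivity)
    rwa [one_add_div hm'.ne', inv_div] at h
  calc exp (-t) = exp (-(t / m)) ^ m := by rw [← exp_nat_mul]; field_simp
    _ ≤ (m / (m + t)) ^ m := pow_le_pow_left₀ (exp_pos _).le hstep m

theorem stmt_6 (K n : ℕ) (hK : 1 ≤ K) (hKn : K ≤ n) :
    (1 - (K : ℝ) / n) ^ (n - K) ≥ Real.exp (-(K : ℝ)) := by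
  have hn : (n : ℝ) ≠ 0 := by norm_cast; omega
  have hbase : 1 - (K : ℝ) / n = (n - K : ℕ) / ((n - K : ℕ) + K) := by
    push_cast [hKn]
    rw [sub_add_cancel, sub_div, div_self hn]
  rw [hbase]
  exact exp_neg_le_div_add_pow K.cast_nonneg (n - K)
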